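/- Reduction theorem (case n > d): let X ∈ ℝ^{d×n} with SVD X = UDV' (U ∈ ℝ^{d×d}, V ∈ ℝ^{n×d}, U'U = V'V = I), Σ = (1/n)XX'. Then for every Θ ≻ 0 and H ∈ ℝ^{d×d}, c(Θ, √n·HUV'; X) equals g(Θ,H), and for every L ∈ ℝ^{d×n}, c(Θ,L;X) ≥ g(Θ, (1/√n)LVU'), where g(Θ,H) = (1/2)tr(H'Θ⁻¹H) − (1/2)log det Θ − tr(H'√Σ) + (1/2)tr(ΘΣ) + λ‖Θ‖_{ℓ1} + γ√n‖H‖_⋆. -/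

import Mathlib

open Matrix Real MeasureTheory

theorem Matrix.isHermitian_transpose_mul_self {m n : Type*} [Fintype m] (A : Matrix m n ℝ) :
    (Aᵀ * A).IsHermitian := by
  simpa using Matrix.isHermitian_conjTranspose_mul_self A

noncomputable def Matrix.PosSemidef.sqrt {n : Type*} [Fintype n] [DecidableEq n]
    {A : Matrix n n ℝ} (hA : Matrix.PosSemidef A) : Matrix n n ℝ :=
  hA.1.eigenvectorUnitary.1 * diagonal ((↑) ∘ (√·) ∘ hA.1.eigenvalues) *
    (star hA.1.eigenvectorUnitary : Matrix n n ℝ)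

noncomputable def nuclearNorm {k l : ℕ} (A : Matrix (Fin k) (Fin l) ℝ) : ℝ :=
  ∑ i, Real.sqrt ((Matrix.isHermitian_transpose_mul_self A).eigenvalues i)

noncomputable def spectralNorm' {k l : ℕ} (A : Matrix (Fin k) (Fin l) ℝ) : ℝ :=
  ⨆ i, Real.sqrt ((Matrix.isHermitian_transpose_mul_self A).eigenvalues i)

noncomputable def l1Norm {k l : ℕ} (A : Matrix (Fin k) (Fin l) ℝ) : ℝ := ∑ i, ∑ j, |A i j|

/-- The Gaussian objective `c(Θ, L; X)` with normalization constant `n`. -/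
noncomputable def cObj {d : ℕ} (n : ℕ) (lam gam : ℝ) {k : ℕ} (Θ : Matrix (Fin d) (Fin d) ℝ)
    (L X : Matrix (Fin d) (Fin k) ℝ) : ℝ :=
  (1 / (2 * n)) * (Lᵀ * Θ⁻¹ * L).trace - (1/2) * Real.log Θ.det
    - (1 / n) * (Lᵀ * X).trace + (1 / (2 * n)) * (Θ * (X * Xᵀ)).trace
    + lam * l1Norm Θ + gam * nuclearNorm L

/-- The reduced objective `g(Θ, H)` with sample covariance `S` and its PSD square root `sqrtS`. -/
noncomputable def gObj {d : ℕ} (n : ℕ) (lam gam : ℝ)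
    (S sqrtS Θ H : Matrix (Fin d) (Fin d) ℝ) : ℝ :=
  (1/2) * (Hᵀ * Θ⁻¹ * H).trace - (1/2) * Real.log Θ.det - (Hᵀ * sqrtS).trace
    + (1/2) * (Θ * S).trace + lam * l1Norm Θ + gam * Real.sqrt n * nuclearNorm H

/-! Put W = UVᵀ, so that WWᵀ = 1. The SVD gives √Σ = n^(-1/2)·UDUᵀ and X = √n·√Σ·W, so substituting
L = √n·HW into c leaves every trace term unchanged, and ‖HW‖⋆ = ‖H‖⋆; this is the identity. For the
inequality put H = n^(-1/2)·LWᵀ: the linear term again matches, while WᵀW ⪯ 1 can only decrease the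
quadratic term and the nuclear norm. The latter uses the dual description
‖L‖⋆ = max {tr(FᵀL) : FᵀF ⪯ 1}, with the maximum attained at F = L·(LᵀL)^(-1/2) (pseudo-inverse). -/

namespace Matrix

section Semiorthogonal

variable {m n : Type*} [Fintype m] [Fintype n] [DecidableEq m] {W : Matrix m n ℝ}

lemma trace_transpose_mul_mul_of_mul_transpose_eq_one (hW : W * Wᵀ = 1)
    (A B : Matrix m m ℝ) : ((A * W)ᵀ * (B * W)).trace = (Aᵀ * B).trace := by
  rw [transpose_mul, Matrix.mul_assoc, trace_mul_comm, Matrix.mul_assoc, Matrix.mul_assoc, hW,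
    Matrix.mul_one]

variable [DecidableEq n]

lemma transpose_mul_one_sub_transpose_mul_self (hW : W * Wᵀ = 1) :
    (1 - Wᵀ * W)ᵀ * (1 - Wᵀ * W) = 1 - Wᵀ * W := by
  have hidem : Wᵀ * W * (Wᵀ * W) = Wᵀ * W := by
    rw [Matrix.mul_assoc, ← Matrix.mul_assoc W, hW, Matrix.one_mul]
  simp only [transpose_sub, transpose_one, transpose_mul, transpose_transpose, Matrix.sub_mul,
    Matrix.mul_sub, Matrix.one_mul, Matrix.mul_one, hidem, sub_self, sub_zero]

lemma posSemidef_one_sub_transpose_mul_self (hW : W * Wᵀ = 1) : (1 - Wᵀ * W).PosSemidef := by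
  have h := posSemidef_conjTranspose_mul_self (1 - Wᵀ * W)
  rwa [conjTranspose_eq_transpose_of_trivial, transpose_mul_one_sub_transpose_mul_self hW] at h

lemma trace_mul_mul_transpose_le {M : Matrix n n ℝ} (hW : W * Wᵀ = 1) (hM : M.PosSemidef) :
    (W * M * Wᵀ).trace ≤ M.trace := by
  have hP := (hM.mul_mul_conjTranspose_same (1 - Wᵀ * W)).trace_nonneg
  rw [conjTranspose_eq_transpose_of_trivial, trace_mul_cycle,
    transpose_mul_one_sub_transpose_mul_self hW, Matrix.sub_mul, trace_sub, Matrix.one_mul,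
    Matrix.mul_assoc, trace_mul_comm] at hP
  linarith

end Semiorthogonal

open scoped MatrixOrder in
lemma PosSemidef.sqrt_eq_of_sq_eq {n : Type*} [Fintype n] [DecidableEq n] {A B : Matrix n n ℝ}
    (hA : A.PosSemidef) (hB : B.PosSemidef) (h : B ^ 2 = A) : hA.sqrt = B := by
  have hcfc : hA.sqrt = CFC.sqrt A := by
    rw [CFC.sqrt_eq_real_sqrt A hA.nonneg, cfcₙ_eq_cfc, hA.1.cfc_eq, IsHermitian.cfc,
      Unitary.conjStarAlgAut_apply]
    rfl
  rw [hcfc, ← h]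
  exact CFC.sqrt_sq B hB.nonneg

variable {m n : Type*} [Fintype m] [Fintype n]

lemma trace_transpose_mul_le_sum_sqrt_diag (G M : Matrix m n ℝ) :
    (Gᵀ * M).trace ≤ ∑ i, √((Gᵀ * G) i i) * √((Mᵀ * M) i i) := by
  have hdiag : ∀ (N : Matrix m n ℝ) i, (Nᵀ * N) i i = ∑ j, N j i ^ 2 := by
    intro N i; simp [mul_apply, sq]
  simp only [trace, diag, mul_apply, transpose_apply, hdiag]
  exact Finset.sum_le_sum fun i _ => Real.sum_mul_le_sqrt_mul_sqrt _ _ _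

variable [DecidableEq n]

lemma exists_orthogonal_transpose_mul_self_eq_diagonal (A : Matrix m n ℝ) :
    ∃ R : Matrix n n ℝ, Rᵀ * R = 1 ∧ R * Rᵀ = 1 ∧
      (A * R)ᵀ * (A * R) = diagonal (isHermitian_transpose_mul_self A).eigenvalues := by
  set hA := isHermitian_transpose_mul_self A
  set R : Matrix n n ℝ := (hA.eigenvectorUnitary : Matrix n n ℝ)
  have hR := hA.eigenvectorUnitary.2
  have hRtR : Rᵀ * R = 1 := by
    rw [← conjTranspose_eq_transpose_of_trivial]; exact mem_unitaryGroup_iff'.mp hR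
  have hRRt : R * Rᵀ = 1 := by
    rw [← conjTranspose_eq_transpose_of_trivial]; exact mem_unitaryGroup_iff.mp hR
  have hspec : Aᵀ * A = R * diagonal hA.eigenvalues * Rᵀ := by
    conv_lhs => rw [hA.spectral_theorem]
    simp [Unitary.conjStarAlgAut_apply, R, star_eq_conjTranspose]
  refine ⟨R, hRtR, hRRt, ?_⟩
  calc (A * R)ᵀ * (A * R) = Rᵀ * (Aᵀ * A) * R := by simp only [transpose_mul, Matrix.mul_assoc]
    _ = Rᵀ * R * diagonal hA.eigenvalues * (Rᵀ * R) := by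
      conv_lhs => rw [hspec]
      simp only [Matrix.mul_assoc]
    _ = diagonal hA.eigenvalues := by rw [hRtR, Matrix.one_mul, Matrix.mul_one]

end Matrix

section NuclearNorm

variable {a b : ℕ}

lemma trace_transpose_mul_le_nuclearNorm {F : Matrix (Fin a) (Fin b) ℝ}
    (hF : (1 - Fᵀ * F).PosSemidef) (L : Matrix (Fin a) (Fin b) ℝ) :
    (Fᵀ * L).trace ≤ nuclearNorm L := by
  obtain ⟨R, hRtR, hRRt, hLR⟩ := exists_orthogonal_transpose_mul_self_eq_diagonal L
  have hFR : ∀ i, ((F * R)ᵀ * (F * R)) i i ≤ 1 := by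
    intro i
    have hi := (hF.conjTranspose_mul_mul_same R).diag_nonneg (i := i)
    rw [conjTranspose_eq_transpose_of_trivial, Matrix.mul_sub, Matrix.sub_mul, Matrix.mul_one,
      hRtR] at hi
    simpa [transpose_mul, Matrix.mul_assoc] using hi
  calc (Fᵀ * L).trace = ((F * R)ᵀ * (L * R)).trace := by
        rw [transpose_mul, Matrix.mul_assoc, trace_mul_comm Rᵀ]
        simp only [Matrix.mul_assoc, hRRt, Matrix.mul_one]
    _ ≤ ∑ i, √(((F * R)ᵀ * (F * R)) i i) * √(((L * R)ᵀ * (L * R)) i i) :=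
        trace_transpose_mul_le_sum_sqrt_diag _ _
    _ ≤ ∑ i, √((isHermitian_transpose_mul_self L).eigenvalues i) := by
        refine Finset.sum_le_sum fun i _ => ?_
        rw [hLR, diagonal_apply_eq]
        exact mul_le_of_le_one_left (Real.sqrt_nonneg _) (Real.sqrt_le_one.mpr (hFR i))
    _ = nuclearNorm L := rfl

lemma exists_trace_transpose_mul_eq_nuclearNorm (A : Matrix (Fin a) (Fin b) ℝ) :
    ∃ E : Matrix (Fin a) (Fin b) ℝ, (1 - Eᵀ * E).PosSemidef ∧ (Eᵀ * A).trace = nuclearNorm A := by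
  obtain ⟨R, hRtR, hRRt, hAR⟩ := exists_orthogonal_transpose_mul_self_eq_diagonal A
  set ev := (isHermitian_transpose_mul_self A).eigenvalues
  have hgev : ∀ i, (√(ev i))⁻¹ * ev i = √(ev i) := fun i => by
    rw [inv_mul_eq_div, Real.div_sqrt]
  -- Since (√0)⁻¹ = 0, this is the pseudo-inverse square root: zero eigenvalues need no case split.
  set E := A * R * diagonal (fun i => (√(ev i))⁻¹) * Rᵀ
  have hEt : Eᵀ = R * diagonal (fun i => (√(ev i))⁻¹) * (A * R)ᵀ := by
    simp only [E, transpose_mul, diagonal_transpose, transpose_transpose, Matrix.mul_assoc]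
  refine ⟨E, ?_, ?_⟩
  · have hsub : 1 - Eᵀ * E = R * diagonal (fun i => 1 - √(ev i) * (√(ev i))⁻¹) * Rᵀ := by
      calc 1 - Eᵀ * E = R * (1 - diagonal (fun i => (√(ev i))⁻¹) * ((A * R)ᵀ * (A * R))
            * diagonal (fun i => (√(ev i))⁻¹)) * Rᵀ := by
            rw [Matrix.mul_sub, Matrix.sub_mul, Matrix.mul_one, hRRt, hEt]
            simp only [E, Matrix.mul_assoc]
        _ = _ := by
            rw [hAR, diagonal_mul_diagonal, diagonal_mul_diagonal, ← diagonal_one, diagonal_sub]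
            simp only [hgev]
    have hdiag := PosSemidef.diagonal (d := fun i => 1 - √(ev i) * (√(ev i))⁻¹)
      fun i => sub_nonneg.mpr mul_inv_le_one
    rw [hsub]
    simpa using hdiag.mul_mul_conjTranspose_same R
  · calc (Eᵀ * A).trace = (diagonal (fun i => (√(ev i))⁻¹) * ((A * R)ᵀ * (A * R))).trace := by
          rw [hEt]
          simp only [Matrix.mul_assoc]
          rw [trace_mul_comm R]
          simp only [Matrix.mul_assoc]
      _ = nuclearNorm A := by
          rw [hAR, diagonal_mul_diagonal, trace_diagonal]
          simp only [hgev]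
          rfl

lemma nuclearNorm_smul {c : ℝ} (hc : 0 ≤ c) (A : Matrix (Fin a) (Fin b) ℝ) :
    nuclearNorm (c • A) = c * nuclearNorm A := by
  obtain ⟨E, hE, hEA⟩ := exists_trace_transpose_mul_eq_nuclearNorm A
  obtain ⟨E', hE', hE'A⟩ := exists_trace_transpose_mul_eq_nuclearNorm (c • A)
  have hsmul : ∀ F : Matrix (Fin a) (Fin b) ℝ, (Fᵀ * (c • A)).trace = c * (Fᵀ * A).trace :=
    fun F => by rw [Matrix.mul_smul, trace_smul, smul_eq_mul]
  apply le_antisymm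
  · rw [← hE'A, hsmul]
    exact mul_le_mul_of_nonneg_left (trace_transpose_mul_le_nuclearNorm hE' A) hc
  · rw [← hEA, ← hsmul]
    exact trace_transpose_mul_le_nuclearNorm hE _

lemma nuclearNorm_mul_le {m : ℕ} {W : Matrix (Fin b) (Fin m) ℝ} (hW : (1 - W * Wᵀ).PosSemidef)
    (A : Matrix (Fin a) (Fin b) ℝ) : nuclearNorm (A * W) ≤ nuclearNorm A := by
  obtain ⟨E, hE, hEAW⟩ := exists_trace_transpose_mul_eq_nuclearNorm (A * W)
  have hfeas : (1 - (E * Wᵀ)ᵀ * (E * Wᵀ)).PosSemidef := by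
    have h : 1 - (E * Wᵀ)ᵀ * (E * Wᵀ) = (1 - W * Wᵀ) + W * (1 - Eᵀ * E) * Wᵀ := by
      simp only [transpose_mul, transpose_transpose, Matrix.mul_sub, Matrix.sub_mul,
        Matrix.mul_one, Matrix.mul_assoc]
      abel
    rw [h]
    simpa using hW.add (hE.mul_mul_conjTranspose_same W)
  calc nuclearNorm (A * W) = ((E * Wᵀ)ᵀ * A).trace := by
        rw [← hEAW, transpose_mul, transpose_transpose, ← Matrix.mul_assoc, trace_mul_comm,
          Matrix.mul_assoc]
    _ ≤ nuclearNorm A := trace_transpose_mul_le_nuclearNorm hfeas A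

lemma nuclearNorm_mul_transpose_le {m : ℕ} {W : Matrix (Fin b) (Fin m) ℝ} (hW : W * Wᵀ = 1)
    (A : Matrix (Fin a) (Fin m) ℝ) :
    nuclearNorm (A * Wᵀ) ≤ nuclearNorm A :=
  nuclearNorm_mul_le (by simpa using posSemidef_one_sub_transpose_mul_self hW) A

lemma nuclearNorm_mul_of_mul_transpose_eq_one {m : ℕ} {W : Matrix (Fin b) (Fin m) ℝ}
    (hW : W * Wᵀ = 1) (A : Matrix (Fin a) (Fin b) ℝ) :
    nuclearNorm (A * W) = nuclearNorm A := by
  refine le_antisymm (nuclearNorm_mul_le (by simp [hW, PosSemidef.zero]) A) ?_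
  calc nuclearNorm A = nuclearNorm (A * W * Wᵀ) := by rw [Matrix.mul_assoc, hW, Matrix.mul_one]
    _ ≤ nuclearNorm (A * W) := nuclearNorm_mul_transpose_le hW _

end NuclearNorm

section Reduction

variable {d n : ℕ} {lam gam : ℝ} {W X : Matrix (Fin d) (Fin n) ℝ} {R : Matrix (Fin d) (Fin d) ℝ}

lemma cObj_smul_mul_eq_gObj (hn : 0 < n) (hW : W * Wᵀ = 1) (hX : X = √n • (R * W))
    (Θ H : Matrix (Fin d) (Fin d) ℝ) :
    cObj n lam gam Θ (√n • (H * W)) X = gObj n lam gam ((n : ℝ)⁻¹ • (X * Xᵀ)) R Θ H := by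
  have hquad : ((H * W)ᵀ * Θ⁻¹ * (H * W)).trace = (Hᵀ * Θ⁻¹ * H).trace := by
    rw [Matrix.mul_assoc, ← Matrix.mul_assoc Θ⁻¹,
      trace_transpose_mul_mul_of_mul_transpose_eq_one hW, Matrix.mul_assoc]
  have hlin : ((H * W)ᵀ * X).trace = √n * (Hᵀ * R).trace := by
    rw [hX, Matrix.mul_smul, trace_smul, trace_transpose_mul_mul_of_mul_transpose_eq_one hW,
      smul_eq_mul]
  have hsq : √(n : ℝ) ^ 2 = n := Real.sq_sqrt n.cast_nonneg
  have hn' : (n : ℝ) ≠ 0 := Nat.cast_ne_zero.mpr hn.ne'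
  simp only [cObj, gObj, transpose_smul, Matrix.smul_mul, Matrix.mul_smul, trace_smul,
    smul_eq_mul, hquad, hlin, nuclearNorm_smul (Real.sqrt_nonneg _),
    nuclearNorm_mul_of_mul_transpose_eq_one hW]
  field_simp
  rw [hsq]
  ring

lemma gObj_smul_mul_transpose_le_cObj (hn : 0 < n) (hgam : 0 ≤ gam) (hW : W * Wᵀ = 1)
    (hX : X = √n • (R * W)) {Θ : Matrix (Fin d) (Fin d) ℝ} (hΘ : Θ⁻¹.PosSemidef)
    (L : Matrix (Fin d) (Fin n) ℝ) :
    gObj n lam gam ((n : ℝ)⁻¹ • (X * Xᵀ)) R Θ ((√n)⁻¹ • (L * Wᵀ)) ≤ cObj n lam gam Θ L X := by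
  have hquad : ((L * Wᵀ)ᵀ * Θ⁻¹ * (L * Wᵀ)).trace ≤ (Lᵀ * Θ⁻¹ * L).trace := by
    have hL : (Lᵀ * Θ⁻¹ * L).PosSemidef := by
      simpa using hΘ.conjTranspose_mul_mul_same L
    simpa [Matrix.mul_assoc] using trace_mul_mul_transpose_le hW hL
  have hn' : √(n : ℝ) ≠ 0 := (Real.sqrt_pos.mpr (Nat.cast_pos.mpr hn)).ne'
  have hlin : ((L * Wᵀ)ᵀ * R).trace = (√n)⁻¹ * (Lᵀ * X).trace := by
    rw [hX, Matrix.mul_smul, trace_smul, smul_eq_mul, inv_mul_cancel_left₀ hn', transpose_mul,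
      transpose_transpose, Matrix.mul_assoc, trace_mul_comm, Matrix.mul_assoc]
  have hnuc := nuclearNorm_mul_transpose_le hW L
  simp only [cObj, gObj, transpose_smul, Matrix.smul_mul, Matrix.mul_smul, trace_smul,
    smul_eq_mul, hlin, nuclearNorm_smul (inv_nonneg.mpr (Real.sqrt_nonneg _))]
  have hsq : ∀ t : ℝ, (√(n : ℝ))⁻¹ * ((√n)⁻¹ * t) = (n : ℝ)⁻¹ * t := fun t => by
    rw [← mul_assoc, ← mul_inv, Real.mul_self_sqrt n.cast_nonneg]
  have hq := mul_le_mul_of_nonneg_left hquad (inv_nonneg.mpr n.cast_nonneg : 0 ≤ (n : ℝ)⁻¹)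
  have hg := mul_le_mul_of_nonneg_left hnuc hgam
  rw [hsq, hsq, mul_assoc gam, mul_inv_cancel_left₀ hn', one_div (n : ℝ),
    show (1 : ℝ) / (2 * n) = 1 / 2 * (n : ℝ)⁻¹ by ring]
  linarith

end Reduction

theorem reduction_n_gt_d_general {d n : ℕ} (hdn : d < n) (lam gam : ℝ)
    (hgam : 0 ≤ gam)
    (X : Matrix (Fin d) (Fin n) ℝ) (U D : Matrix (Fin d) (Fin d) ℝ)
    (V : Matrix (Fin n) (Fin d) ℝ) (σ : Fin d → ℝ)
    (hSVD : X = U * D * Vᵀ) (hU : Uᵀ * U = 1) (hV : Vᵀ * V = 1)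
    (hD : D = Matrix.diagonal σ) (hσ : ∀ i, 0 ≤ σ i)
    (hSig : (((n : ℝ)⁻¹) • (X * Xᵀ)).PosSemidef) :
    (∀ (Θ H : Matrix (Fin d) (Fin d) ℝ), Θ.PosDef →
      cObj n lam gam Θ (Real.sqrt n • (H * U * Vᵀ)) X =
        gObj n lam gam (((n : ℝ)⁻¹) • (X * Xᵀ)) hSig.sqrt Θ H) ∧
    (∀ (Θ : Matrix (Fin d) (Fin d) ℝ) (L : Matrix (Fin d) (Fin n) ℝ), Θ.PosDef →
      gObj n lam gam (((n : ℝ)⁻¹) • (X * Xᵀ)) hSig.sqrt Θ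
        ((Real.sqrt n)⁻¹ • (L * V * Uᵀ)) ≤ cObj n lam gam Θ L X) := by
  have hn : 0 < n := d.zero_le.trans_lt hdn
  have hsqrt_n : √(n : ℝ) ≠ 0 := (Real.sqrt_pos.mpr (Nat.cast_pos.mpr hn)).ne'
  have hW : U * Vᵀ * (U * Vᵀ)ᵀ = 1 := by
    rw [transpose_mul, transpose_transpose, Matrix.mul_assoc, ← Matrix.mul_assoc Vᵀ, hV,
      Matrix.one_mul, mul_eq_one_comm.mp hU]
  have hsqrt : hSig.sqrt = (√n)⁻¹ • (U * D * Uᵀ) := by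
    refine hSig.sqrt_eq_of_sq_eq ?_ ?_
    · have hUDU := (PosSemidef.diagonal hσ).mul_mul_conjTranspose_same U
      rw [conjTranspose_eq_transpose_of_trivial, ← hD] at hUDU
      exact hUDU.smul (inv_nonneg.mpr (Real.sqrt_nonneg _))
    · rw [smul_pow, inv_pow, Real.sq_sqrt n.cast_nonneg, sq, hSVD]
      simp only [transpose_mul, transpose_transpose, hD, diagonal_transpose, Matrix.mul_assoc]
      rw [← Matrix.mul_assoc Uᵀ U, hU, ← Matrix.mul_assoc Vᵀ V, hV, Matrix.one_mul]
  have hX : X = √n • (hSig.sqrt * (U * Vᵀ)) := by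
    rw [hsqrt, Matrix.smul_mul, smul_smul, mul_inv_cancel₀ hsqrt_n, one_smul, hSVD]
    simp only [Matrix.mul_assoc]
    rw [← Matrix.mul_assoc Uᵀ U, hU, Matrix.one_mul]
  refine ⟨fun Θ H _ => ?_, fun Θ L hΘ => ?_⟩
  · rw [Matrix.mul_assoc H]
    exact cObj_smul_mul_eq_gObj hn hW hX Θ H
  · rw [show L * V * Uᵀ = L * (U * Vᵀ)ᵀ by
      rw [transpose_mul, transpose_transpose, Matrix.mul_assoc]]
    exact gObj_smul_mul_transpose_le_cObj hn hgam hW hX hΘ.inv.posSemidef L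

/-- Reduction theorem, case `n > d`. -/
theorem reduction_n_gt_d {d n : ℕ} (hdn : d < n) (lam gam : ℝ)
    (hlam : 0 ≤ lam) (hgam : 0 ≤ gam)
    (X : Matrix (Fin d) (Fin n) ℝ) (U D : Matrix (Fin d) (Fin d) ℝ)
    (V : Matrix (Fin n) (Fin d) ℝ) (σ : Fin d → ℝ)
    (hSVD : X = U * D * Vᵀ) (hU : Uᵀ * U = 1) (hV : Vᵀ * V = 1)
    (hD : D = Matrix.diagonal σ) (hσ : ∀ i, 0 ≤ σ i)
    (hSig : (((n : ℝ)⁻¹) • (X * Xᵀ)).PosSemidef) :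
    (∀ (Θ H : Matrix (Fin d) (Fin d) ℝ), Θ.PosDef →
      cObj n lam gam Θ (Real.sqrt n • (H * U * Vᵀ)) X =
        gObj n lam gam (((n : ℝ)⁻¹) • (X * Xᵀ)) hSig.sqrt Θ H) ∧
    (∀ (Θ : Matrix (Fin d) (Fin d) ℝ) (L : Matrix (Fin d) (Fin n) ℝ), Θ.PosDef →
      gObj n lam gam (((n : ℝ)⁻¹) • (X * Xᵀ)) hSig.sqrt Θ
        ((Real.sqrt n)⁻¹ • (L * V * Uᵀ)) ≤ cObj n lam gam Θ L X) :=
  reduction_n_gt_d_general hdn lam gam hgam X U D V σ hSVD hU hV hD hσ hSig
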